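/- Let f and g be normal soft int-groups on a group G over a universe U. Then the soft product f * g, defined by (f * g)(x) = ⋃ {f(u) ∩ g(v) : u, v ∈ G, u*v = x}, is a normal soft int-group on G. -/
import Mathlib


/-- A soft int-group on a group `G` over universe `U`: a soft set `f : G → Set U`
such that `f x ∩ f y ⊆ f (x * y)` and `f x⁻¹ = f x` for all `x y : G`. -/
def IsSoftIntGroup {U G : Type*} [Group G] (f : G → Set U) : Prop :=
  (∀ x y : G, f x ∩ f y ⊆ f (x * y)) ∧ (∀ x : G, f x⁻¹ = f x)

/-- A normal soft int-group: a soft int-group with `f (x * y) = f (y * x)`. -/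
def IsNormalSoftIntGroup {U G : Type*} [Group G] (f : G → Set U) : Prop :=
  IsSoftIntGroup f ∧ ∀ x y : G, f (x * y) = f (y * x)

/-- Soft product of soft sets: `(f * g)(x) = ⋃ {f u ∩ g v : u * v = x}`. -/
def softProd {U G : Type*} [Group G] (f g : G → Set U) : G → Set U :=
  fun x => ⋃ (u : G) (v : G) (_ : u * v = x), f u ∩ g v

lemma softConjInv2025 {U G : Type*} [Group G] {f : G → Set U}
    (hf : IsNormalSoftIntGroup f) (z u : G) : f (z⁻¹ * u * z) = f u := by
  have h := hf.2 z⁻¹ (u * z)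
  rw [mul_assoc, h]
  group

lemma mem_softProd {U G : Type*} [Group G] {f g : G → Set U} {x : G} {a : U} :
    a ∈ softProd f g x ↔ ∃ u v : G, u * v = x ∧ a ∈ f u ∩ g v := by
  simp only [softProd, Set.mem_iUnion, Set.mem_inter_iff]; tauto

/-- The soft product of two normal soft int-groups is a normal soft
int-group. -/
theorem stmt_10 {U G : Type*} [Group G] (f g : G → Set U)
    (hf : IsNormalSoftIntGroup f) (hg : IsNormalSoftIntGroup g) :
    IsNormalSoftIntGroup (softProd f g) := by
  obtain ⟨⟨hf1, hf2⟩, hf3⟩ := hf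
  obtain ⟨⟨hg1, hg2⟩, hg3⟩ := hg
  have hfc := softConjInv2025 (f := f) ⟨⟨hf1, hf2⟩, hf3⟩
  have hgc := softConjInv2025 (f := g) ⟨⟨hg1, hg2⟩, hg3⟩
  refine ⟨⟨?_, ?_⟩, ?_⟩
  · rintro x y a ⟨hax, hay⟩
    rw [mem_softProd] at hax hay ⊢
    obtain ⟨u, v, huv, hau, hav⟩ := hax
    obtain ⟨s, t, hst, has, hat⟩ := hay
    refine ⟨u * s, s⁻¹ * v * s * t, by rw [← huv, ← hst]; group, ?_, ?_⟩
    · exact hf1 u s ⟨hau, has⟩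
    · apply hg1
      rw [hgc s v]
      exact ⟨hav, hat⟩
  · intro x
    ext a
    simp only [mem_softProd]
    constructor
    · rintro ⟨u, v, huv, hau, hav⟩
      refine ⟨u⁻¹, u * v⁻¹ * u⁻¹, by rw [← inv_inv x, ← huv]; group, by rwa [hf2], ?_⟩
      have : u * v⁻¹ * u⁻¹ = u⁻¹⁻¹ * v⁻¹ * u⁻¹ := by group
      rw [this, hgc, hg2]
      exact hav
    · rintro ⟨u, v, huv, hau, hav⟩
      refine ⟨u⁻¹, u * v⁻¹ * u⁻¹, ?_, by rwa [hf2], ?_⟩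
      · rw [show x = x⁻¹⁻¹ by group, ← huv]; group
      · have : u * v⁻¹ * u⁻¹ = u⁻¹⁻¹ * v⁻¹ * u⁻¹ := by group
        rw [this, hgc, hg2]
        exact hav
  · intro x y
    ext a
    simp only [mem_softProd]
    constructor
    · rintro ⟨u, v, huv, hau, hav⟩
      exact ⟨x⁻¹ * u * x, x⁻¹ * v * x,
        (by rw [show x⁻¹*u*x*(x⁻¹*v*x) = x⁻¹*(u*v)*x by group, huv]; group),
        by rwa [hfc], by rwa [hgc]⟩
    · rintro ⟨u, v, huv, hau, hav⟩
      exact ⟨y⁻¹ * u * y, y⁻¹ * v * y,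
        (by rw [show y⁻¹*u*y*(y⁻¹*v*y) = y⁻¹*(u*v)*y by group, huv]; group),
        by rwa [hfc], by rwa [hgc]⟩
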